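/- arXiv:1410.2640 — 3 statements merged into one kernel-verified Lean document; each statement's English description precedes it below -/
import Mathlib

section
/- Let m ≥ 2 be an integer and set d = 2m. If for every number of rows n there exists a deterministic (1/8, M)-Itemset-Frequency-Indicator sketching scheme for pairs on d items and n rows, then 2^M ≥ m! (equivalently, M ≥ log₂(m!)). -/
/-
Each permutation π of `Fin m` gives a database whose rows are all digit strings in `(Fin 8)^m`:
left item `a` occurs in a row iff digit `a` is `0`, right item `c` iff digit `π⁻¹ c` is `0`.
The pair `(a, c)` then has frequency `1/8` if `π a = c` (one digit is constrained) and `1/64`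
otherwise (two independent digits), so the decoder recovers `π` from the sketch. Hence the
encoder is injective on these `m!` databases.
-/

/-- The frequency of an itemset `T` in a database `D` with `n` rows over `d` items:
the fraction of rows in which every item of `T` occurs. -/
noncomputable def freq {n d : ℕ} (D : Fin n → Fin d → Bool) (T : Finset (Fin d)) : ℝ :=
  ((Finset.univ.filter (fun i : Fin n => ∀ j ∈ T, D i j = true)).card : ℝ) / n

/-- A deterministic `(ε, M)`-Itemset-Frequency-Indicator sketching scheme for pairs on `d`
items and `n` rows: an encoder into `M`-bit sketches and a decoder answering every pairwise
query correctly. -/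
def DetIFIScheme (d n M : ℕ) (ε : ℝ) : Prop :=
  ∃ (Enc : (Fin n → Fin d → Bool) → Fin (2 ^ M))
    (Dec : Fin (2 ^ M) → Fin d → Fin d → Bool),
    ∀ D : Fin n → Fin d → Bool, ∀ a b : Fin d, a ≠ b →
      (freq D {a, b} ≥ ε → Dec (Enc D) a b = true) ∧
      (freq D {a, b} ≤ ε / 2 → Dec (Enc D) a b = false)

open Finset

theorem DetIFIScheme.card_le_of_separated {d n M : ℕ} {ε : ℝ} (hS : DetIFIScheme d n M ε)
    {ι : Type*} [Fintype ι] (D : ι → Fin n → Fin d → Bool)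
    (hsep : Pairwise fun i j =>
      ∃ a b, a ≠ b ∧ ε ≤ freq (D i) {a, b} ∧ freq (D j) {a, b} ≤ ε / 2) :
    Fintype.card ι ≤ 2 ^ M := by
  obtain ⟨Enc, Dec, hED⟩ := hS
  have hinj : Function.Injective (Enc ∘ D) := by
    intro i j hij
    by_contra hne
    obtain ⟨a, b, hab, hi, hj⟩ := hsep hne
    have hDec_i := (hED (D i) a b hab).1 hi
    have hDec_j := (hED (D j) a b hab).2 hj
    simp_all
  simpa using Fintype.card_le_of_injective _ hinj

theorem card_filter_forall_mem_eq {ι α : Type*} [Fintype ι] [DecidableEq ι] [Fintype α]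
    [DecidableEq α] (S : Finset ι) (x : α) :
    #{f : ι → α | ∀ i ∈ S, f i = x} = Fintype.card α ^ (Fintype.card ι - #S) := by
  have hpi : ({f : ι → α | ∀ i ∈ S, f i = x} : Finset _)
      = Fintype.piFinset fun i => if i ∈ S then {x} else univ := by
    ext f
    simp only [mem_filter, mem_univ, true_and, Fintype.mem_piFinset]
    refine ⟨fun hf i => ?_, fun hf i hi => by simpa [hi] using hf i⟩
    split_ifs with hi <;> simp [hf, hi]
  rw [hpi, Fintype.card_piFinset]
  simp only [apply_ite card, card_singleton, card_univ, prod_ite, prod_const_one, one_mul,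
    prod_const, filter_not, filter_mem_eq_inter, univ_inter]
  rw [card_sdiff_of_subset (subset_univ S), card_univ]

theorem freq_eq_inv_card_pow {n d : ℕ} {ι α : Type*} [Fintype ι] [DecidableEq ι] [Fintype α]
    [DecidableEq α] (e : Fin n ≃ (ι → α)) (g : Fin d → ι) (x : α) (T : Finset (Fin d)) :
    freq (fun r j => decide (e r (g j) = x)) T = ((Fintype.card α : ℝ)⁻¹) ^ #(T.image g) := by
  have hrows : #{r : Fin n | ∀ j ∈ T, decide (e r (g j) = x) = true}
      = #{f : ι → α | ∀ i ∈ T.image g, f i = x} :=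
    card_equiv e fun r => by simp
  have hn : n = Fintype.card α ^ Fintype.card ι := by
    simpa using Fintype.card_congr e
  have hk : #(T.image g) ≤ Fintype.card ι := card_le_univ _
  have hα : (Fintype.card α : ℝ) ≠ 0 := Nat.cast_ne_zero.mpr (Fintype.card_pos_iff.mpr ⟨x⟩).ne'
  unfold freq
  rw [hrows, card_filter_forall_mem_eq, hn]
  push_cast
  rw [pow_sub₀ _ hα hk, inv_pow]
  field_simp

section PermutationDatabase

variable {m : ℕ}

def itemSides (m : ℕ) : Fin (2 * m) ≃ Fin m ⊕ Fin m :=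
  (finCongr (two_mul m)).trans finSumFinEquiv.symm

def permDB (π : Equiv.Perm (Fin m)) (r : Fin (8 ^ m)) (j : Fin (2 * m)) : Bool :=
  decide (finFunctionFinEquiv.symm r (Sum.elim id π.symm (itemSides m j)) = 0)

theorem freq_permDB_pair (π : Equiv.Perm (Fin m)) (a c : Fin m) :
    freq (permDB π) {(itemSides m).symm (.inl a), (itemSides m).symm (.inr c)}
      = (1 / 8 : ℝ) ^ #({a, π.symm c} : Finset (Fin m)) := by
  refine (freq_eq_inv_card_pow _ (Sum.elim id π.symm ∘ itemSides m) 0 _).trans ?_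
  simp [image_insert]

theorem permDB_separated :
    Pairwise fun π σ : Equiv.Perm (Fin m) => ∃ a b, a ≠ b ∧
      1 / 8 ≤ freq (permDB π) {a, b} ∧ freq (permDB σ) {a, b} ≤ 1 / 8 / 2 := by
  intro π σ hne
  obtain ⟨a, ha⟩ : ∃ a, π a ≠ σ a := by
    by_contra! h
    exact hne (Equiv.ext h)
  refine ⟨_, _, (itemSides m).symm.injective.ne Sum.inl_ne_inr,
    (freq_permDB_pair π a (π a)).ge.trans' ?_, (freq_permDB_pair σ a (π a)).le.trans ?_⟩
  · simp
  · have : a ≠ σ.symm (π a) := fun h => ha (σ.eq_symm_apply.mp h).symm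
    rw [card_pair this]
    norm_num

end PermutationDatabase

theorem det_itemset_sketch_counting_general (m M : ℕ)
    (h : ∀ n : ℕ, DetIFIScheme (2 * m) n M (1 / 8)) :
    Nat.factorial m ≤ 2 ^ M := by
  simpa [Fintype.card_perm] using (h (8 ^ m)).card_le_of_separated permDB permDB_separated

theorem det_itemset_sketch_counting (m M : ℕ) (hm : 2 ≤ m)
    (h : ∀ n : ℕ, DetIFIScheme (2 * m) n M (1 / 8)) :
    Nat.factorial m ≤ 2 ^ M :=
  det_itemset_sketch_counting_general m M h
end

section
/- Let m, r be positive integers, d = 2·m·r, and fix permutations Π_{k,l} of Fin m for k, l ∈ Fin r. Fix k, l ∈ Fin r and i, j : Fin m. (1) If k' ∈ Fin r with k' ≠ k, then for every S ⊆ Fin m, v_{k',S}(k·m + i) = false, so the itemset T_{k,l}(i,j) never appears in the row v_{k',S}. (2) If j ≠ Π_{k,l}(i) and S is drawn uniformly at random from subsets of Fin m, then the probability that both v_{k,S}(k·m + i) = true and v_{k,S}(m·r + l·m + j) = true equals 1/4. -/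
/-- The coordinate `k·m + i` (in the first half) of `Fin (2·m·r)`. -/
def idxL (m r : ℕ) (k : Fin r) (i : Fin m) : Fin (2 * m * r) :=
  ⟨(k : ℕ) * m + (i : ℕ), by
    have h1 : ((k : ℕ) + 1) * m ≤ r * m := Nat.mul_le_mul (Nat.succ_le_of_lt k.isLt) (le_refl m)
    have h2 : (i : ℕ) < m := i.isLt
    nlinarith⟩

/-- The coordinate `m·r + l·m + j` (in the second half) of `Fin (2·m·r)`. -/
def idxR (m r : ℕ) (l : Fin r) (j : Fin m) : Fin (2 * m * r) :=
  ⟨m * r + (l : ℕ) * m + (j : ℕ), by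
    have h1 : ((l : ℕ) + 1) * m ≤ r * m := Nat.mul_le_mul (Nat.succ_le_of_lt l.isLt) (le_refl m)
    have h2 : (j : ℕ) < m := j.isLt
    nlinarith⟩

/-- The row `v_{k,S}` associated to a block `k ∈ Fin r`, a subset `S ⊆ Fin m`, and a family
of permutations `π k l` of `Fin m`: on the first half, coordinate `k·m + i` is true iff
`i ∈ S` (and coordinates outside block `k` are false); on the second half, coordinate
`m·r + l·m + j` is true iff `(π k l)⁻¹ j ∉ S`. -/
def vrow2 (m r : ℕ) (hm : 0 < m) (π : Fin r → Fin r → Equiv.Perm (Fin m)) (k : Fin r)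
    (S : Finset (Fin m)) : Fin (2 * m * r) → Bool :=
  fun x =>
    if h : (x : ℕ) < m * r then
      decide ((x : ℕ) / m = (k : ℕ)) &&
        decide ((⟨(x : ℕ) % m, Nat.mod_lt _ hm⟩ : Fin m) ∈ S)
    else
      decide
        ((π k ⟨((x : ℕ) - m * r) / m, by
            have hx := x.isLt
            have h2 : 2 * m * r = m * r + m * r := by ring
            have h3 : r * m = m * r := Nat.mul_comm r m
            exact (Nat.div_lt_iff_lt_mul hm).mpr (by omega)⟩).symm
          ⟨((x : ℕ) - m * r) % m, Nat.mod_lt _ hm⟩ ∉ S)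

/-! Under the uniform distribution on subsets, the memberships of two distinct points are
independent fair coins. At the two query coordinates the row `vrow2 … k S` reads `i ∈ S` and
`(π k l)⁻¹ j ∉ S`; these concern distinct points exactly when `j ≠ π k l i`, whence `1/2 · 1/2`. -/

open Finset
open scoped ENNReal

theorem card_filter_mem_and_notMem {α : Type*} [Fintype α] [DecidableEq α] {a b : α}
    (hab : a ≠ b) : #{S : Finset α | a ∈ S ∧ b ∉ S} = 2 ^ (Fintype.card α - 2) := by
  have hcard : #((univ.erase a).erase b) = Fintype.card α - 2 := by
    rw [card_erase_of_mem (mem_erase.2 ⟨hab.symm, mem_univ b⟩), card_erase_of_mem (mem_univ a),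
      card_univ, Nat.sub_sub]
  rw [← hcard, ← card_powerset]
  refine card_nbij' (·.erase a) (insert a) ?_ ?_ ?_ ?_ <;>
    simp only [Set.MapsTo, Set.LeftInvOn, mem_coe, mem_filter, mem_powerset, subset_iff,
      mem_erase, mem_insert, mem_univ, true_and, and_true] <;> grind

theorem uniformOfFintype_finset_mem_and_notMem {α : Type*} [Fintype α] [DecidableEq α] {a b : α}
    (hab : a ≠ b) :
    (PMF.uniformOfFintype (Finset α)).toOuterMeasure {S | a ∈ S ∧ b ∉ S} = 1 / 4 := by
  have h2 : 2 ≤ Fintype.card α := by simpa [hab] using card_le_univ {a, b}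
  rw [PMF.toOuterMeasure_uniformOfFintype_apply, Fintype.card_subtype]
  simp only [Set.mem_ofPred_eq]
  rw [card_filter_mem_and_notMem hab, Fintype.card_finset, ← pow_sub_mul_pow 2 h2, Nat.cast_mul]
  simpa using ENNReal.mul_div_mul_left 1 4
    (c := ((2 ^ (Fintype.card α - 2) : ℕ) : ℝ≥0∞)) (by positivity) (ENNReal.natCast_ne_top _)

section

variable {m r : ℕ} (hm : 0 < m) (π : Fin r → Fin r → Equiv.Perm (Fin m)) (S : Finset (Fin m))

theorem vrow2_idxL (k k' : Fin r) (i : Fin m) :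
    vrow2 m r hm π k' S (idxL m r k i) = (decide (k = k') && decide (i ∈ S)) := by
  have hlt : (k : ℕ) * m + i < m * r := by
    nlinarith [Nat.mul_le_mul_right m (Nat.succ_le_of_lt k.isLt), i.isLt]
  have hdiv : ((k : ℕ) * m + i) / m = k := by
    rw [Nat.add_comm, Nat.add_mul_div_right _ _ hm, Nat.div_eq_of_lt i.isLt, Nat.zero_add]
  have hmod : ((k : ℕ) * m + i) % m = i := by
    rw [Nat.add_comm, Nat.add_mul_mod_self_right, Nat.mod_eq_of_lt i.isLt]
  simp [vrow2, idxL, hlt, hdiv, hmod, Fin.ext_iff]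

theorem vrow2_idxR (k l : Fin r) (j : Fin m) :
    vrow2 m r hm π k S (idxR m r l j) = decide ((π k l).symm j ∉ S) := by
  have hge : ¬ m * r + (l : ℕ) * m + j < m * r := by omega
  have hsub : m * r + (l : ℕ) * m + j - m * r = l * m + j := by omega
  have hdiv : ((l : ℕ) * m + j) / m = l := by
    rw [Nat.add_comm, Nat.add_mul_div_right _ _ hm, Nat.div_eq_of_lt j.isLt, Nat.zero_add]
  have hmod : ((l : ℕ) * m + j) % m = j := by
    rw [Nat.add_comm, Nat.add_mul_mod_self_right, Nat.mod_eq_of_lt j.isLt]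
  simp [vrow2, idxR, hge, hsub, hdiv, hmod]

end

theorem vrow2_block_structure (m r : ℕ) (hm : 0 < m)
    (π : Fin r → Fin r → Equiv.Perm (Fin m)) (k l : Fin r) (i j : Fin m) :
    (∀ k' : Fin r, k' ≠ k → ∀ S : Finset (Fin m),
      vrow2 m r hm π k' S (idxL m r k i) = false) ∧
    (j ≠ π k l i →
      (PMF.uniformOfFintype (Finset (Fin m))).toOuterMeasure
        {S | vrow2 m r hm π k S (idxL m r k i) = true ∧
             vrow2 m r hm π k S (idxR m r l j) = true} = 1 / 4) := by
  refine ⟨fun k' hk' S => by simp [vrow2_idxL, hk'.symm], fun hj => ?_⟩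
  have hne : i ≠ (π k l).symm j := fun h => hj (by rw [h, Equiv.apply_symm_apply])
  simpa [vrow2_idxL, vrow2_idxR] using uniformOfFintype_finset_mem_and_notMem hne
end

section
/- There is a constant C > 0 with the following property. For all integers m ≥ 2 and r ≥ 1, setting d = 2·m·r, there exists n ≤ C · r · log d such that for every family (Π_{k,l})_{k,l ∈ Fin r} of permutations of Fin m there is a database D : Fin n → Fin d → Bool, each of whose rows equals v_{k,S} for some k ∈ Fin r and S ⊆ Fin m, satisfying: for all k, l ∈ Fin r and i, j : Fin m, f_{T_{k,l}(i,j)}(D) = 0 if j = Π_{k,l}(i), and f_{T_{k,l}(i,j)}(D) ≥ 1/(8r) if j ≠ Π_{k,l}(i). In particular, the map from families (Π_{k,l})_{k,l} to such databases is injective. -/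
open Finset

theorem card_filter_few_hits_le {V : Type*} [Fintype V] [DecidableEq V] (E : Finset V)
    (hE : Fintype.card V ≤ 4 * #E) (N : ℕ) :
    (#{x : Fin N → V | 8 * #{p | x p ∈ E} < N} : ℝ) ≤
      (954 / 1000) ^ N * (Fintype.card V : ℝ) ^ N := by
  -- Weight each hit by `β`: a bad `x` has weight `≥ (10/11)^N`, all `x` together `(∑ w)^N`.
  set β : ℝ := (10 / 11) ^ 8
  set w : V → ℝ := fun v => if v ∈ E then β else 1
  have hw : ∀ v, 0 ≤ w v := fun v => by positivity
  have hprod (x : Fin N → V) : ∏ p, w (x p) = β ^ #{p | x p ∈ E} := by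
    simp only [w, prod_ite, prod_const, one_pow, mul_one]
  have hsum : ∑ v, w v ≤ Fintype.card V * (3 / 4 + β / 4) := by
    have hsplit : ∑ v, w v = Fintype.card V - (1 - β) * #E := by
      simp only [w, sum_ite, sum_const, filter_mem_eq_inter, univ_inter, nsmul_eq_mul, mul_one]
      have hc : (#{x | x ∉ E} : ℝ) = Fintype.card V - #E := by
        rw [filter_not, filter_mem_eq_inter, univ_inter, ← compl_eq_univ_sdiff, card_compl,
          Nat.cast_sub (card_le_univ E)]
      rw [hc]; ring
    have : (Fintype.card V : ℝ) ≤ 4 * #E := by exact_mod_cast hE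
    rw [hsplit]; nlinarith [show β ≤ 1 by norm_num]
  have hbad : ∀ x ∈ ({x : Fin N → V | 8 * #{p | x p ∈ E} < N} : Finset _),
      (1 : ℝ) ≤ (11 / 10) ^ N * ∏ p, w (x p) := by
    intro x hx
    have hhits : 8 * #{p | x p ∈ E} ≤ N := (mem_filter.mp hx).2.le
    calc (1 : ℝ) = (11 / 10) ^ N * (10 / 11) ^ N := by rw [← mul_pow]; norm_num
      _ ≤ (11 / 10) ^ N * (10 / 11) ^ (8 * #{p | x p ∈ E}) := by
        exact mul_le_mul_of_nonneg_left (pow_le_pow_of_le_one (by norm_num) (by norm_num) hhits)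
          (by positivity)
      _ = (11 / 10) ^ N * ∏ p, w (x p) := by rw [hprod, pow_mul]
  calc (#{x : Fin N → V | 8 * #{p | x p ∈ E} < N} : ℝ)
      ≤ ∑ x ∈ ({x : Fin N → V | 8 * #{p | x p ∈ E} < N} : Finset _),
          (11 / 10) ^ N * ∏ p, w (x p) := by
        simpa using sum_le_sum hbad
    _ ≤ ∑ x : Fin N → V, (11 / 10) ^ N * ∏ p, w (x p) :=
        sum_le_sum_of_subset_of_nonneg (subset_univ _) fun x _ _ => by
          have := prod_nonneg fun p (_ : p ∈ univ) => hw (x p)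
          positivity
    _ = (11 / 10) ^ N * (∑ v, w v) ^ N := by rw [← mul_sum, Fintype.sum_pow]
    _ ≤ (11 / 10) ^ N * (Fintype.card V * (3 / 4 + β / 4)) ^ N := by
        gcongr
    _ = ((11 / 10) * (3 / 4 + β / 4)) ^ N * (Fintype.card V : ℝ) ^ N := by
        rw [mul_pow, mul_pow]; ring
    _ ≤ (954 / 1000) ^ N * (Fintype.card V : ℝ) ^ N := by
        gcongr
        norm_num [β]

theorem card_finset_le_four_mul_card_filter_mem_and_not_mem {α : Type*} [Fintype α]
    [DecidableEq α] {a b : α} (hab : a ≠ b) :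
    Fintype.card (Finset α) ≤ 4 * #{S : Finset α | a ∈ S ∧ b ∉ S} := by
  set E : Finset (Finset α) := {S | a ∈ S ∧ b ∉ S}
  -- `S` is recovered from `insert a (S.erase b)` together with whether `a ∈ S` and `b ∈ S`
  have hinj : Set.InjOn
      (fun S : Finset α => (insert a (S.erase b), decide (a ∈ S), decide (b ∈ S)))
      (univ : Finset (Finset α)) := by
    intro S _ T _ hST
    simp only [Prod.mk.injEq, decide_eq_decide] at hST
    obtain ⟨hmid, ha, hb⟩ := hST
    ext x
    by_cases hxa : x = a
    · subst hxa; exact ha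
    by_cases hxb : x = b
    · subst hxb; exact hb
    simpa [hxa, hxb] using congrArg (x ∈ ·) hmid
  calc Fintype.card (Finset α) = #(univ : Finset (Finset α)) := rfl
    _ ≤ #(E ×ˢ (univ : Finset (Bool × Bool))) := card_le_card_of_injOn _ (fun S _ => by
        simp [E, hab.symm]) hinj
    _ = 4 * #E := by simp [card_product, mul_comm]

def IsSeparatingFamily {α : Type*} [DecidableEq α] {N : ℕ} (S : Fin N → Finset α) : Prop :=
  ∀ a b, a ≠ b → N ≤ 8 * #{p | a ∈ S p ∧ b ∉ S p}

theorem exists_isSeparatingFamily {α : Type*} [Fintype α] [DecidableEq α] {N : ℕ}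
    (hN : (Fintype.card α : ℝ) ^ 2 * (954 / 1000) ^ N < 1) :
    ∃ S : Fin N → Finset α, IsSeparatingFamily S := by
  unfold IsSeparatingFamily
  set K := (Fintype.card (Finset α) : ℝ)
  let bad (q : α × α) : Finset (Fin N → Finset α) := {S | 8 * #{p | q.1 ∈ S p ∧ q.2 ∉ S p} < N}
  have hbad : ∀ q ∈ (univ : Finset α).offDiag, (#(bad q) : ℝ) ≤ (954 / 1000) ^ N * K ^ N :=
    fun q hq => by
      simpa [bad, K] using card_filter_few_hits_le _
        (card_finset_le_four_mul_card_filter_mem_and_not_mem (mem_offDiag.mp hq).2.2) N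
  by_contra! hcover
  have hle : K ^ N ≤ (Fintype.card α : ℝ) ^ 2 * ((954 / 1000) ^ N * K ^ N) :=
    calc K ^ N = #(univ : Finset (Fin N → Finset α)) := by simp [K]
      _ ≤ #((univ : Finset α).offDiag.biUnion bad) := by
        refine mod_cast card_le_card fun S _ => ?_
        obtain ⟨a, b, hab, hS⟩ := hcover S
        exact mem_biUnion.mpr ⟨(a, b), by simpa using hab, by simpa [bad] using hS⟩
      _ ≤ ∑ q ∈ (univ : Finset α).offDiag, (#(bad q) : ℝ) := mod_cast card_biUnion_le
      _ ≤ #(univ : Finset α).offDiag * ((954 / 1000) ^ N * K ^ N) := by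
        simpa using sum_le_sum hbad
      _ ≤ (Fintype.card α : ℝ) ^ 2 * ((954 / 1000) ^ N * K ^ N) := by
        gcongr
        rw [offDiag_card, card_univ, sq]
        exact_mod_cast Nat.sub_le _ _
  have hK : 0 < K ^ N := by positivity
  nlinarith

theorem sq_mul_pow_log_lt_one (m : ℕ) :
    (m : ℝ) ^ 2 * (954 / 1000) ^ (31 * (Nat.log 2 m + 1)) < 1 := by
  set L := Nat.log 2 m
  have hm : (m : ℝ) < 2 ^ (L + 1) := mod_cast Nat.lt_pow_succ_log_self one_lt_two m
  calc (m : ℝ) ^ 2 * (954 / 1000) ^ (31 * (L + 1))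
      ≤ (m : ℝ) ^ 2 * (1 / 4) ^ (L + 1) := by
        rw [pow_mul]; gcongr; norm_num
    _ < (2 ^ (L + 1)) ^ 2 * (1 / 4) ^ (L + 1) := by gcongr
    _ = 1 := by rw [← pow_mul, mul_comm (L + 1) 2, pow_mul, ← mul_pow]; norm_num

theorem natCast_mul_log_le (m r : ℕ) (hm : 0 < m) (hr : 0 < r) :
    ((r * (31 * (Nat.log 2 m + 1)) : ℕ) : ℝ) ≤ 50 * r * Real.log (2 * m * r) := by
  set L := Nat.log 2 m
  have hpow : (2 : ℝ) ^ (L + 1) ≤ 2 * m * r := by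
    have h2L : (2 : ℝ) ^ L ≤ m := mod_cast Nat.pow_log_le_self 2 hm.ne'
    have hr1 : (1 : ℝ) ≤ r := mod_cast hr
    rw [pow_succ]; nlinarith
  have hlog : (L + 1) * Real.log 2 ≤ Real.log (2 * m * r) := by
    simpa [Real.log_pow] using Real.log_le_log (by positivity) hpow
  have hlog2 := Real.log_two_gt_d9
  have hr0 : (0 : ℝ) ≤ r := r.cast_nonneg
  push_cast
  nlinarith [mul_le_mul_of_nonneg_left hlog hr0,
    mul_le_mul_of_nonneg_left hlog2.le (by positivity : (0 : ℝ) ≤ r * (L + 1))]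

section PermutationDatabase

variable {m r : ℕ} (hm : 0 < m) (π : Fin r → Fin r → Equiv.Perm (Fin m))

theorem vrow2_idxL_eq_true_iff (k' k : Fin r) (S : Finset (Fin m)) (i : Fin m) :
    vrow2 m r hm π k' S (idxL m r k i) = true ↔ k' = k ∧ i ∈ S := by
  have hlt : (idxL m r k i : ℕ) < m * r := by
    show (k : ℕ) * m + i < m * r
    nlinarith [Nat.mul_le_mul_right m (Nat.succ_le_of_lt k.isLt), i.isLt]
  have hdiv : ((k : ℕ) * m + i) / m = k := by
    rw [mul_comm, Nat.mul_add_div hm, Nat.div_eq_of_lt i.isLt, add_zero]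
  have hfin : (⟨(idxL m r k i : ℕ) % m, Nat.mod_lt _ hm⟩ : Fin m) = i :=
    Fin.ext (Nat.mul_add_mod_of_lt i.isLt)
  rw [vrow2, dif_pos hlt, hfin, Bool.and_eq_true, decide_eq_true_eq, decide_eq_true_eq]
  change ((k : ℕ) * m + i) / m = k' ∧ _ ↔ _
  rw [hdiv, Fin.val_eq_val, eq_comm]

theorem vrow2_idxR_eq_true_iff (k l : Fin r) (S : Finset (Fin m)) (j : Fin m) :
    vrow2 m r hm π k S (idxR m r l j) = true ↔ (π k l).symm j ∉ S := by
  have hdiv : ((l : ℕ) * m + j) / m = l := by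
    rw [mul_comm, Nat.mul_add_div hm, Nat.div_eq_of_lt j.isLt, add_zero]
  have hge : ¬ (idxR m r l j : ℕ) < m * r := by
    show ¬ m * r + (l : ℕ) * m + j < m * r
    omega
  have hsub : (idxR m r l j : ℕ) - m * r = l * m + j := by
    show m * r + (l : ℕ) * m + j - m * r = _
    omega
  have hl : (⟨((idxR m r l j : ℕ) - m * r) / m, by rw [hsub, hdiv]; exact l.isLt⟩ : Fin r) = l :=
    Fin.ext ((congrArg (· / m) hsub).trans hdiv)
  have hj : (⟨((idxR m r l j : ℕ) - m * r) % m, Nat.mod_lt _ hm⟩ : Fin m) = j :=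
    Fin.ext ((congrArg (· % m) hsub).trans (Nat.mul_add_mod_of_lt j.isLt))
  rw [vrow2, dif_neg hge, hl, hj, decide_eq_true_eq]

def permDatabase {N : ℕ} (S : Fin N → Finset (Fin m)) : Fin (r * N) → Fin (2 * m * r) → Bool :=
  fun t => vrow2 m r hm π (finProdFinEquiv.symm t).1 (S (finProdFinEquiv.symm t).2)

theorem freq_permDatabase {N : ℕ} (S : Fin N → Finset (Fin m)) (k l : Fin r) (i j : Fin m) :
    freq (permDatabase hm π S) {idxL m r k i, idxR m r l j} =
      #{p | i ∈ S p ∧ (π k l).symm j ∉ S p} / (r * N) := by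
  have hcard : #{t | ∀ a ∈ ({idxL m r k i, idxR m r l j} : Finset _),
      permDatabase hm π S t a = true} =
        #(({k} : Finset (Fin r)) ×ˢ ({p | i ∈ S p ∧ (π k l).symm j ∉ S p} : Finset (Fin N))) :=
    card_equiv finProdFinEquiv.symm fun t => by
      simp only [permDatabase, mem_filter, mem_univ, true_and, mem_insert, mem_singleton,
        forall_eq_or_imp, forall_eq, vrow2_idxL_eq_true_iff, vrow2_idxR_eq_true_iff, mem_product]
      rw [and_assoc]
      exact and_congr_right fun hk => by rw [hk]
  rw [freq, hcard, card_product, card_singleton, one_mul]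
  push_cast
  ring

theorem freq_permDatabase_apply_eq_zero {N : ℕ} (S : Fin N → Finset (Fin m)) (k l : Fin r)
    (i : Fin m) : freq (permDatabase hm π S) {idxL m r k i, idxR m r l (π k l i)} = 0 := by
  simp [freq_permDatabase]

theorem one_div_le_freq_permDatabase {N : ℕ} (hr : 0 < r) (hN : 0 < N)
    {S : Fin N → Finset (Fin m)} (hS : IsSeparatingFamily S) {k l : Fin r} {i j : Fin m}
    (hj : j ≠ π k l i) :
    1 / (8 * r) ≤ freq (permDatabase hm π S) {idxL m r k i, idxR m r l j} := by
  have hi : i ≠ (π k l).symm j := fun h => hj (by rw [h, Equiv.apply_symm_apply])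
  have hcount : (N : ℝ) ≤ 8 * #{p | i ∈ S p ∧ (π k l).symm j ∉ S p} := mod_cast hS _ _ hi
  rw [freq_permDatabase, div_le_div_iff₀ (by positivity) (by positivity)]
  nlinarith [(Nat.cast_pos.mpr hr : (0 : ℝ) < r)]

theorem permDatabase_injective {N : ℕ} (hr : 0 < r) (hN : 0 < N) {S : Fin N → Finset (Fin m)}
    (hS : IsSeparatingFamily S) :
    Function.Injective fun π : Fin r → Fin r → Equiv.Perm (Fin m) => permDatabase hm π S := by
  intro π π' hππ'
  funext k l
  refine Equiv.ext fun i => ?_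
  by_contra hne
  have hzero := freq_permDatabase_apply_eq_zero hm π S k l i
  have hpos := one_div_le_freq_permDatabase hm π' hr hN hS hne
  simp only at hππ'
  rw [← hππ', hzero] at hpos
  have : (0 : ℝ) < 1 / (8 * r) := by positivity
  linarith

end PermutationDatabase

/-- There is a constant `C > 0` such that for all `m ≥ 2`, `r ≥ 1` with `d = 2·m·r`, there is
a number of rows `n ≤ C · r · log d` and, for each family `π` of permutations of `Fin m`
indexed by `Fin r × Fin r`, a database `D` with `n` rows, each of the form `v_{k,S}`, whose
query frequencies `f_{T_{k,l}(i,j)}` are `0` when `j = π k l i` and at least `1/(8r)` when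
`j ≠ π k l i`; moreover the map from families to databases is injective. -/
theorem encode_permutation_family_in_database :
    ∃ C : ℝ, C > 0 ∧
      ∀ m r : ℕ, 2 ≤ m → 1 ≤ r →
        ∃ n : ℕ, (n : ℝ) ≤ C * r * Real.log (2 * m * r) ∧
          ∀ hm : 0 < m,
          ∃ Dmap : (Fin r → Fin r → Equiv.Perm (Fin m)) →
              (Fin n → Fin (2 * m * r) → Bool),
            Function.Injective Dmap ∧
            ∀ π : Fin r → Fin r → Equiv.Perm (Fin m),
              (∀ t : Fin n, ∃ (k : Fin r) (S : Finset (Fin m)),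
                Dmap π t = vrow2 m r hm π k S) ∧
              ∀ (k l : Fin r) (i j : Fin m),
                (j = π k l i → freq (Dmap π) {idxL m r k i, idxR m r l j} = 0) ∧
                (j ≠ π k l i →
                  freq (Dmap π) {idxL m r k i, idxR m r l j} ≥ 1 / (8 * r)) := by
  refine ⟨50, by norm_num, fun m r hm2 hr => ?_⟩
  set N := 31 * (Nat.log 2 m + 1)
  have hN : 0 < N := by omega
  refine ⟨r * N, natCast_mul_log_le m r (by omega) hr, fun hm => ?_⟩
  obtain ⟨S, hS⟩ := exists_isSeparatingFamily (α := Fin m) (N := N)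
    (by simpa using sq_mul_pow_log_lt_one m)
  refine ⟨fun π => permDatabase hm π S, permDatabase_injective hm hr hN hS,
    fun π => ⟨fun t => ⟨_, _, rfl⟩, fun k l i j => ⟨?_, fun hj =>
      one_div_le_freq_permDatabase hm π hr hN hS hj⟩⟩⟩
  rintro rfl
  exact freq_permDatabase_apply_eq_zero hm π S k l i
end
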